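/- For λ < 0 and all x > 0, 1 - F_λ(x) < 2φ(x)φ(λx) / (|λ|(1+λ²)x²), where F_λ is the skew-normal cdf with parameter λ. -/

import Mathlib

open Real MeasureTheory Filter

noncomputable def stdPhi (x : ℝ) : ℝ := (Real.sqrt (2 * Real.pi))⁻¹ * Real.exp (-x ^ 2 / 2)

noncomputable def stdCdf (x : ℝ) : ℝ := ∫ t in Set.Iic x, stdPhi t

noncomputable def snCdf (l x : ℝ) : ℝ := ∫ t in Set.Iic x, 2 * stdPhi t * stdCdf (l * t)

/-!
For `t > 0`, Mills' ratio bound `Φ(-y) ≤ φ(y) / y` at `y = |λ| t` bounds the density by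
`2 φ(t) φ(λt) / (|λ| t) = exp (-(1 + λ²) t² / 2) / (π |λ| t)`. With `a = 1 + λ²`, the function
`-exp (-a t² / 2) / (a t²)` has derivative `exp (-a t² / 2) / t + 2 exp (-a t² / 2) / (a t³)`,
which exceeds this integrand by a positive function; integrating over `(x, ∞)` gives the strict
bound.
-/

open Set Topology ProbabilityTheory

lemma stdPhi_eq_gaussianPDFReal : stdPhi = gaussianPDFReal 0 1 := by
  ext x; simp [stdPhi, gaussianPDFReal]

lemma stdPhi_pos (x : ℝ) : 0 < stdPhi x := by
  rw [stdPhi_eq_gaussianPDFReal]; exact gaussianPDFReal_pos _ _ _ one_ne_zero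

lemma stdPhi_neg (x : ℝ) : stdPhi (-x) = stdPhi x := by
  simp [stdPhi]

lemma integrable_stdPhi : Integrable stdPhi :=
  stdPhi_eq_gaussianPDFReal ▸ integrable_gaussianPDFReal 0 1

lemma integral_stdPhi : ∫ x, stdPhi x = 1 :=
  stdPhi_eq_gaussianPDFReal ▸ integral_gaussianPDFReal_eq_one 0 one_ne_zero

lemma hasDerivAt_stdPhi (t : ℝ) : HasDerivAt stdPhi (-t * stdPhi t) t := by
  have h := (((hasDerivAt_pow 2 t).fun_neg.div_const 2).exp).const_mul (√(2 * π))⁻¹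
  unfold stdPhi
  refine h.congr_deriv ?_
  norm_num; ring

lemma tendsto_stdPhi_atTop : Tendsto stdPhi atTop (𝓝 0) := by
  have h : Tendsto (fun t : ℝ => -t ^ 2 / 2) atTop atBot :=
    (tendsto_neg_atTop_atBot.comp (tendsto_pow_atTop two_ne_zero)).atBot_div_const two_pos
  rw [← mul_zero (√(2 * π))⁻¹]
  exact (tendsto_exp_atBot.comp h).const_mul _

lemma stdPhi_mul_stdPhi_mul (l t : ℝ) :
    stdPhi t * stdPhi (l * t) = (2 * π)⁻¹ * exp (-(1 + l ^ 2) * t ^ 2 / 2) := by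
  have h2π : √(2 * π) * √(2 * π) = 2 * π := mul_self_sqrt (by positivity)
  simp only [stdPhi]
  rw [mul_mul_mul_comm, ← mul_inv, h2π, ← exp_add]
  ring_nf

lemma stdCdf_nonneg (y : ℝ) : 0 ≤ stdCdf y :=
  setIntegral_nonneg measurableSet_Iic fun t _ => (stdPhi_pos t).le

lemma monotone_stdCdf : Monotone stdCdf := fun _ _ hab =>
  setIntegral_mono_set integrable_stdPhi.integrableOn
    (ae_of_all _ fun t => (stdPhi_pos t).le) (Iic_subset_Iic.mpr hab).eventuallyLE

lemma stdCdf_neg (y : ℝ) : stdCdf (-y) = ∫ t in Ioi y, stdPhi t := by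
  rw [stdCdf, ← neg_neg y, ← integral_comp_neg_Iic, neg_neg]
  simp only [stdPhi_neg]

lemma stdCdf_neg_add_stdCdf (y : ℝ) : stdCdf (-y) + stdCdf y = 1 := by
  rw [stdCdf_neg, add_comm, stdCdf, intervalIntegral.integral_Iic_add_Ioi
    integrable_stdPhi.integrableOn integrable_stdPhi.integrableOn, integral_stdPhi]

lemma stdCdf_le_one (y : ℝ) : stdCdf y ≤ 1 := by
  linarith [stdCdf_neg_add_stdCdf y, stdCdf_nonneg (-y)]

lemma integral_Ioi_mul_stdPhi {y : ℝ} (hy : 0 < y) :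
    IntegrableOn (fun t => t * stdPhi t) (Ioi y) ∧ ∫ t in Ioi y, t * stdPhi t = stdPhi y := by
  have hderiv : ∀ t ∈ Ici y, HasDerivAt (fun s => -stdPhi s) (t * stdPhi t) t :=
    fun t _ => (hasDerivAt_stdPhi t).neg.congr_deriv (by ring)
  have hnonneg : ∀ t ∈ Ioi y, 0 ≤ t * stdPhi t :=
    fun t ht => mul_nonneg (hy.trans ht).le (stdPhi_pos t).le
  have hlim : Tendsto (fun s => -stdPhi s) atTop (𝓝 0) := by
    simpa using tendsto_stdPhi_atTop.neg
  refine ⟨integrableOn_Ioi_deriv_of_nonneg' hderiv hnonneg hlim, ?_⟩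
  simpa using integral_Ioi_of_hasDerivAt_of_nonneg' hderiv hnonneg hlim

lemma stdCdf_neg_le {y : ℝ} (hy : 0 < y) : stdCdf (-y) ≤ stdPhi y / y := by
  obtain ⟨hint, hval⟩ := integral_Ioi_mul_stdPhi hy
  rw [stdCdf_neg]
  calc ∫ t in Ioi y, stdPhi t ≤ ∫ t in Ioi y, y⁻¹ * (t * stdPhi t) := by
        refine setIntegral_mono_on integrable_stdPhi.integrableOn (hint.const_mul _)
          measurableSet_Ioi fun t ht => ?_
        rw [← mul_assoc]
        refine le_mul_of_one_le_left (stdPhi_pos t).le ?_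
        rw [inv_mul_eq_div, one_le_div hy]
        exact ht.le
    _ = stdPhi y / y := by rw [integral_const_mul, hval, inv_mul_eq_div]

noncomputable def snPdf (l t : ℝ) : ℝ := 2 * stdPhi t * stdCdf (l * t)

lemma integrable_snPdf (l : ℝ) : Integrable (snPdf l) := by
  have hmeas : Measurable (snPdf l) :=
    (measurable_const.mul (stdPhi_eq_gaussianPDFReal ▸ measurable_gaussianPDFReal 0 1)).mul
      (monotone_stdCdf.measurable.comp (measurable_const_mul l))
  refine (integrable_stdPhi.const_mul 2).mono' hmeas.aestronglyMeasurable (ae_of_all _ fun t => ?_)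
  rw [snPdf, Real.norm_eq_abs,
    abs_of_nonneg (by positivity [stdPhi_pos t, stdCdf_nonneg (l * t)])]
  exact mul_le_of_le_one_right (by positivity [stdPhi_pos t]) (stdCdf_le_one _)

lemma integral_snPdf (l : ℝ) : ∫ t, snPdf l t = 1 := by
  have hflip : ∫ t, snPdf (-l) t = ∫ t, snPdf l t := by
    rw [← integral_neg_eq_self]
    simp [snPdf, stdPhi_neg]
  have hsum : ∫ t, (snPdf (-l) t + snPdf l t) = 2 := by
    have h (t : ℝ) : snPdf (-l) t + snPdf l t = 2 * stdPhi t := by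
      rw [snPdf, snPdf, neg_mul, ← mul_add, stdCdf_neg_add_stdCdf, mul_one]
    simp only [h, integral_const_mul, integral_stdPhi, mul_one]
  rw [integral_add (integrable_snPdf _) (integrable_snPdf _), hflip] at hsum
  linarith

lemma one_sub_snCdf (l x : ℝ) : 1 - snCdf l x = ∫ t in Ioi x, snPdf l t := by
  rw [← integral_snPdf l, ← intervalIntegral.integral_Iic_add_Ioi (b := x)
    (integrable_snPdf l).integrableOn (integrable_snPdf l).integrableOn]
  simp [snCdf, snPdf]

lemma setIntegral_pos_of_pos {X : Type*} [MeasurableSpace X] {μ : Measure X} {s : Set X}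
    {f : X → ℝ} (hs : MeasurableSet s) (hμs : 0 < μ s) (hf : IntegrableOn f s μ)
    (hpos : ∀ x ∈ s, 0 < f x) : 0 < ∫ x in s, f x ∂μ := by
  rw [setIntegral_pos_iff_support_of_nonneg_ae
    (ae_restrict_of_forall_mem hs fun x hx => (hpos x hx).le) hf,
    inter_eq_right.mpr fun x hx => Function.mem_support.mpr (hpos x hx).ne']
  exact hμs

section GaussianTail

variable {a x : ℝ}

lemma hasDerivAt_neg_exp_neg_mul_sq_div (ha : a ≠ 0) {t : ℝ} (ht : t ≠ 0) :
    HasDerivAt (fun s => -(exp (-a * s ^ 2 / 2) / (a * s ^ 2)))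
      (exp (-a * t ^ 2 / 2) / t + 2 * exp (-a * t ^ 2 / 2) / (a * t ^ 3)) t := by
  have hexp : HasDerivAt (fun s => exp (-a * s ^ 2 / 2)) (exp (-a * t ^ 2 / 2) * (-a * t)) t := by
    refine (((hasDerivAt_pow 2 t).const_mul (-a)).div_const 2).exp.congr_deriv ?_
    push_cast; ring
  have hden : HasDerivAt (fun s => a * s ^ 2) (a * (2 * t)) t := by
    simpa using (hasDerivAt_pow 2 t).const_mul a
  refine (hexp.div hden (by positivity)).neg.congr_deriv ?_
  field_simp
  ring

lemma tendsto_exp_neg_mul_sq_div (ha : 0 < a) :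
    Tendsto (fun s => exp (-a * s ^ 2 / 2) / (a * s ^ 2)) atTop (𝓝 0) := by
  have hsq : Tendsto (fun s : ℝ => a * s ^ 2) atTop atTop :=
    (tendsto_pow_atTop two_ne_zero).const_mul_atTop ha
  have hexp : Tendsto (fun s : ℝ => exp (-a * s ^ 2 / 2)) atTop (𝓝 0) := by
    refine tendsto_exp_atBot.comp <|
      (tendsto_neg_atTop_atBot.comp (hsq.atTop_div_const two_pos)).congr fun s => ?_
    simp only [Function.comp_apply]; ring
  exact hexp.div_atTop hsq

lemma integral_Ioi_exp_neg_mul_sq_div_lt (ha : 0 < a) (hx : 0 < x) :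
    IntegrableOn (fun t => exp (-a * t ^ 2 / 2) / t) (Ioi x) ∧
      ∫ t in Ioi x, exp (-a * t ^ 2 / 2) / t < exp (-a * x ^ 2 / 2) / (a * x ^ 2) := by
  set u : ℝ → ℝ := fun t => exp (-a * t ^ 2 / 2) / t
  set v : ℝ → ℝ := fun t => 2 * exp (-a * t ^ 2 / 2) / (a * t ^ 3)
  have hu_pos : ∀ t ∈ Ioi x, 0 < u t := fun t ht => by positivity [hx.trans ht]
  have hv_pos : ∀ t ∈ Ioi x, 0 < v t := fun t ht => by positivity [hx.trans ht]
  have hderiv : ∀ t ∈ Ici x, HasDerivAt (fun s => -(exp (-a * s ^ 2 / 2) / (a * s ^ 2)))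
      (u t + v t) t :=
    fun t ht => hasDerivAt_neg_exp_neg_mul_sq_div ha.ne' (hx.trans_le ht).ne'
  have hnonneg : ∀ t ∈ Ioi x, 0 ≤ u t + v t :=
    fun t ht => (add_pos (hu_pos t ht) (hv_pos t ht)).le
  have hlim := (tendsto_exp_neg_mul_sq_div ha).neg
  rw [neg_zero] at hlim
  have huv := integrableOn_Ioi_deriv_of_nonneg' hderiv hnonneg hlim
  have hu : IntegrableOn u (Ioi x) := by
    refine huv.mono' (by fun_prop : Measurable u).aestronglyMeasurable
      (ae_restrict_of_forall_mem measurableSet_Ioi fun t ht => ?_)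
    rw [Real.norm_eq_abs, abs_of_pos (hu_pos t ht)]
    exact le_add_of_nonneg_right (hv_pos t ht).le
  have hv : IntegrableOn v (Ioi x) := (huv.sub hu).congr_fun (fun t _ => by simp) measurableSet_Ioi
  have hval := integral_Ioi_of_hasDerivAt_of_nonneg' hderiv hnonneg hlim
  rw [integral_add hu hv, zero_sub, neg_neg] at hval
  refine ⟨hu, ?_⟩
  linarith [setIntegral_pos_of_pos measurableSet_Ioi (by simp) hv hv_pos]

end GaussianTail

lemma snPdf_le_of_neg {l t : ℝ} (hl : l < 0) (ht : 0 < t) :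
    snPdf l t ≤ (π * |l|)⁻¹ * (exp (-(1 + l ^ 2) * t ^ 2 / 2) / t) := by
  have hlt : 0 < |l| * t := mul_pos (abs_pos.mpr hl.ne) ht
  have hmills := stdCdf_neg_le hlt
  rw [abs_of_neg hl, neg_mul, neg_neg, stdPhi_neg] at hmills
  calc snPdf l t ≤ 2 * stdPhi t * (stdPhi (l * t) / -(l * t)) :=
        mul_le_mul_of_nonneg_left hmills (by linarith [stdPhi_pos t])
    _ = 2 * (stdPhi t * stdPhi (l * t)) / -(l * t) := by ring
    _ = _ := by
        rw [stdPhi_mul_stdPhi_mul, abs_of_neg hl]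
        field_simp

theorem stmt_3 (l : ℝ) (hl : l < 0) (x : ℝ) (hx : 0 < x) :
    1 - snCdf l x < 2 * stdPhi x * stdPhi (l * x) / (|l| * (1 + l ^ 2) * x ^ 2) := by
  have ha : 0 < 1 + l ^ 2 := by positivity
  have hc : 0 < (π * |l|)⁻¹ := by positivity [abs_pos.mpr hl.ne]
  obtain ⟨hint, hlt⟩ := integral_Ioi_exp_neg_mul_sq_div_lt ha hx
  calc 1 - snCdf l x = ∫ t in Ioi x, snPdf l t := one_sub_snCdf l x
    _ ≤ ∫ t in Ioi x, (π * |l|)⁻¹ * (exp (-(1 + l ^ 2) * t ^ 2 / 2) / t) :=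
        setIntegral_mono_on (integrable_snPdf l).integrableOn (hint.const_mul _)
          measurableSet_Ioi fun t ht => snPdf_le_of_neg hl (hx.trans ht)
    _ < (π * |l|)⁻¹ * (exp (-(1 + l ^ 2) * x ^ 2 / 2) / ((1 + l ^ 2) * x ^ 2)) := by
        rw [integral_const_mul]
        exact mul_lt_mul_of_pos_left hlt hc
    _ = _ := by
        rw [mul_assoc, stdPhi_mul_stdPhi_mul]
        field_simp
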